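/- Let V be a vector space over a field F and let T be an abelian regular subgroup of Aff(V), with δ : V → End(V) defined by τ(x) = (1 + δ(x))·t_x for the unique τ(x) ∈ T with 0·τ(x) = x. Then the map δ : V → End(V) is F-linear. -/
import Mathlib


theorem stmt {F V : Type*} [Field F] [AddCommGroup V] [Module F V]
    (T : Subgroup (V ≃ᵃ[F] V))
    (hcomm : ∀ g ∈ T, ∀ h ∈ T, g * h = h * g)
    (hreg : ∀ v : V, ∃! g : V ≃ᵃ[F] V, g ∈ T ∧ g 0 = v)
    (τ : V → (V ≃ᵃ[F] V)) (hτT : ∀ x, τ x ∈ T) (hτ0 : ∀ x, τ x 0 = x)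
    (δ : V → Module.End F V)
    (hδ : ∀ x z, τ x z = z + δ x z + x) :
    (∀ x y : V, δ (x + y) = δ x + δ y) ∧
    (∀ (c : F) (x : V), δ (c • x) = c • δ x) := by
  have hsymm : ∀ x y : V, δ x y = δ y x := by
    intro x y
    have h := hcomm (τ x) (hτT x) (τ y) (hτT y)
    have h0 : (τ x * τ y) 0 = (τ y * τ x) 0 := by rw [h]
    have hx : (τ x * τ y) 0 = y + δ x y + x := by
      show τ x (τ y 0) = _
      rw [hτ0, hδ]
    have hy : (τ y * τ x) 0 = x + δ y x + y := by
      show τ y (τ x 0) = _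
      rw [hτ0, hδ]
    rw [hx, hy] at h0
    abel_nf at h0
    linear_combination (norm := abel_nf) h0
  constructor
  · intro x y
    apply LinearMap.ext
    intro z
    have : δ (x + y) z = δ z (x + y) := hsymm _ _
    rw [this, map_add, hsymm z x, hsymm z y, LinearMap.add_apply]
  · intro c x
    apply LinearMap.ext
    intro z
    have : δ (c • x) z = δ z (c • x) := hsymm _ _
    rw [this, map_smul, hsymm z x, LinearMap.smul_apply]
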